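/- (Spitzer's identity, commutative case.) Let (A,Q) be a commutative Rota–Baxter ℚ-algebra of weight λ = −1, and extend Q coefficientwise to the operator P on the power series ring A[[x]], P(Σ a_n x^n) = Σ Q(a_n) x^n. Then for every a ∈ A, the element b = exp(−P(log(1 − ax))) of A[[x]] is a solution of the fixed point equation b = 1 + P(b a x); consequently exp(−P(log(1 − ax))) = Σ_{n≥0} x^n · P(P(P(⋯(P(a)a)⋯a)a)a) (the n-fold iterate), i.e. exp(−P(log(1−ax))) = Σ_{n≥0} (Qa)^{[n]} x^n, where (Qa)^{[0]} = 1 and (Qa)^{[n+1]} = Q((Qa)^{[n]} a). -/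

import Mathlib

/-!
Write `g = -P(log(1 - ax))`, so that `g' = Σₙ Q(aⁿ⁺¹) xⁿ`, and `R = Σₙ (Qa)^{[n]} xⁿ`.
By the chain rule `exp(g)' = g' exp(g)`. The weight `-1` Rota–Baxter relation gives
`Σₖ Q(aᵏ⁺¹) (Qa)^{[n-k]} = (n+1) (Qa)^{[n+1]}`, i.e. `R' = g' R`. Over a `ℚ`-algebra a solution
of `F' = g' F` is determined by its constant term, so `exp(g) = R`; the fixed point equation is
the recursion defining `(Qa)^{[n]}`.
-/

/-- Coefficientwise extension of an operator `Q : A → A` to the power series ring `A[[x]]`: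
`P(Σ aₙ xⁿ) = Σ Q(aₙ) xⁿ`. -/
noncomputable def coeffwise {A : Type*} [CommRing A] [Algebra ℚ A]
    (Q : A →ₗ[ℚ] A) (f : PowerSeries A) : PowerSeries A :=
  PowerSeries.mk fun n => Q (PowerSeries.coeff n f)

/-- The exponential `exp(f) = Σₙ fⁿ/n!` of a power series `f` (with zero constant term);
the `m`-th coefficient only involves the terms with `n ≤ m`. -/
noncomputable def expPS {A : Type*} [CommRing A] [Algebra ℚ A]
    (f : PowerSeries A) : PowerSeries A :=
  PowerSeries.mk fun m =>
    PowerSeries.coeff m (∑ n ∈ Finset.range (m + 1), ((n.factorial : ℚ))⁻¹ • f ^ n)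

/-- The logarithm `log(g) = -Σ_{n≥1} (1-g)ⁿ/n` of a power series `g` (with constant term `1`);
the `m`-th coefficient only involves the terms with `n ≤ m`. -/
noncomputable def logPS {A : Type*} [CommRing A] [Algebra ℚ A]
    (g : PowerSeries A) : PowerSeries A :=
  PowerSeries.mk fun m =>
    PowerSeries.coeff m (-∑ n ∈ Finset.range (m + 1), ((n : ℚ))⁻¹ • (1 - g) ^ n)

/-- The iterates `(Qa)^{[0]} = 1`, `(Qa)^{[n+1]} = Q((Qa)^{[n]} a)`. -/
noncomputable def QaIter {A : Type*} [CommRing A] [Algebra ℚ A]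
    (Q : A →ₗ[ℚ] A) (a : A) : ℕ → A
  | 0 => 1
  | n + 1 => Q (QaIter Q a n * a)

open PowerSeries

namespace PowerSeries

theorem eq_of_derivative_eq_mul {R : Type*} [CommRing R] [IsAddTorsionFree R] {h E F : R⟦X⟧}
    (hE : d⁄dX R E = h * E) (hF : d⁄dX R F = h * F)
    (h₀ : constantCoeff E = constantCoeff F) : E = F := by
  ext n
  induction n using Nat.strong_induction_on with
  | _ n ih =>
    cases n with
    | zero => simpa using h₀
    | succ n =>
      have hder : coeff n (d⁄dX R E) = coeff n (d⁄dX R F) := by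
        rw [hE, hF, coeff_mul, coeff_mul]
        refine Finset.sum_congr rfl fun p hp => ?_
        rw [ih p.2 (Nat.lt_succ_of_le (Finset.HasAntidiagonal.antidiagonal.snd_le hp))]
      rw [coeff_derivative, coeff_derivative, ← Nat.cast_succ, mul_comm, ← nsmul_eq_mul,
        mul_comm, ← nsmul_eq_mul] at hder
      exact nsmul_right_injective n.succ_ne_zero hder

theorem coeff_pow_eq_zero_of_constantCoeff_eq_zero {R : Type*} [CommRing R] {f : R⟦X⟧}
    (hf : constantCoeff f = 0) {m n : ℕ} (hmn : m < n) : coeff m (f ^ n) = 0 :=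
  X_pow_dvd_iff.mp (pow_dvd_pow_of_dvd (X_dvd_iff.mpr hf) n) m hmn

variable {A : Type*} [CommRing A] [Algebra ℚ A]

theorem expPS_eq_subst_exp {f : A⟦X⟧} (hf : constantCoeff f = 0) :
    expPS f = (exp A).subst f := by
  ext m
  rw [coeff_subst' (HasSubst.of_constantCoeff_zero' hf), finsum_eq_sum_of_support_subset
    (s := Finset.range (m + 1)), expPS, coeff_mk, map_sum]
  · refine Finset.sum_congr rfl fun n _ => ?_
    rw [coeff_smul, coeff_exp, smul_eq_mul, ← Algebra.smul_def, one_div]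
  · intro n hn
    rw [Finset.coe_range, Set.mem_Iio, Nat.lt_succ_iff]
    by_contra! hmn
    exact hn (by simp only [coeff_pow_eq_zero_of_constantCoeff_eq_zero hf hmn, smul_zero])

theorem derivative_expPS {f : A⟦X⟧} (hf : constantCoeff f = 0) :
    d⁄dX A (expPS f) = d⁄dX A f * expPS f := by
  rw [expPS_eq_subst_exp hf, derivative_subst (HasSubst.of_constantCoeff_zero' hf),
    derivative_exp, mul_comm]

theorem constantCoeff_expPS (f : A⟦X⟧) : constantCoeff (expPS f) = 1 := by
  rw [← coeff_zero_eq_constantCoeff_apply]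
  simp [expPS]

end PowerSeries

section Spitzer

variable {A : Type*} [CommRing A] [Algebra ℚ A] (Q : A →ₗ[ℚ] A) (a : A)

theorem coeff_coeffwise (f : A⟦X⟧) (n : ℕ) : coeff n (coeffwise Q f) = Q (coeff n f) :=
  coeff_mk _ _

theorem coeff_logPS_one_sub_C_mul_X (m : ℕ) :
    coeff m (logPS (1 - C a * X)) = -((m : ℚ)⁻¹ • a ^ m) := by
  rw [logPS, coeff_mk, sub_sub_cancel, map_neg, map_sum,
    Finset.sum_eq_single_of_mem m (Finset.self_mem_range_succ m)]
  · rw [coeff_smul, mul_pow, ← map_pow, coeff_C_mul_X_pow, if_pos rfl]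
  · intro n _ hnm
    rw [coeff_smul, mul_pow, ← map_pow, coeff_C_mul_X_pow, if_neg (Ne.symm hnm), smul_zero]

theorem coeff_neg_coeffwise_logPS (m : ℕ) :
    coeff m (-coeffwise Q (logPS (1 - C a * X))) = (m : ℚ)⁻¹ • Q (a ^ m) := by
  rw [map_neg, coeff_coeffwise, coeff_logPS_one_sub_C_mul_X, map_neg, map_smul, neg_neg]

theorem constantCoeff_neg_coeffwise_logPS :
    constantCoeff (-coeffwise Q (logPS (1 - C a * X))) = 0 := by
  rw [← coeff_zero_eq_constantCoeff_apply, coeff_neg_coeffwise_logPS, Nat.cast_zero, inv_zero,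
    zero_smul]

theorem derivative_neg_coeffwise_logPS :
    d⁄dX A (-coeffwise Q (logPS (1 - C a * X))) = mk fun n => Q (a ^ (n + 1)) := by
  ext n
  rw [coeff_derivative, coeff_neg_coeffwise_logPS, coeff_mk, smul_mul_assoc, ← Nat.cast_succ,
    mul_comm, ← nsmul_eq_mul, ← Nat.cast_smul_eq_nsmul ℚ, smul_smul,
    inv_mul_cancel₀ (Nat.cast_ne_zero.mpr n.succ_ne_zero), one_smul]

theorem mk_QaIter_eq_one_add_coeffwise :
    mk (QaIter Q a) = 1 + coeffwise Q (mk (QaIter Q a) * C a * X) := by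
  ext (_ | n)
  · rw [map_add, coeff_coeffwise, mul_comm _ X, coeff_zero_X_mul, map_zero, add_zero,
      coeff_mk, coeff_one, if_pos rfl, QaIter]
  · rw [map_add, coeff_coeffwise, coeff_succ_mul_X, coeff_mul_C, coeff_mk, coeff_mk,
      coeff_one, if_neg n.succ_ne_zero, zero_add, QaIter]

variable {Q}

theorem sum_range_Q_pow_mul_QaIter
    (hQ : ∀ u v : A, Q u * Q v = Q (u * Q v) + Q (Q u * v) - Q (u * v)) (n : ℕ) :
    ∑ k ∈ Finset.range (n + 1), Q (a ^ (k + 1)) * QaIter Q a (n - k) =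
      (n + 1) • QaIter Q a (n + 1) := by
  induction n with
  | zero => simp [QaIter]
  | succ n ih =>
    set r := QaIter Q a
    set T : ℕ → A := fun k => Q (a ^ (k + 1) * r (n + 1 - k))
    -- Rota–Baxter for `u = aᵏ⁺¹`, `v = r (n - k) * a`; the `T`-terms telescope.
    have hstep : ∀ k ∈ Finset.range (n + 1), Q (a ^ (k + 1)) * r (n + 1 - k) =
        Q (Q (a ^ (k + 1)) * r (n - k) * a) + (T k - T (k + 1)) := by
      intro k hk
      have hnk : n + 1 - k = n - k + 1 := by
        have := Finset.mem_range.mp hk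
        omega
      have hpow : a ^ (k + 1 + 1) * r (n - k) = a ^ (k + 1) * (r (n - k) * a) := by ring
      simp only [T, hnk, Nat.add_sub_add_right, hpow]
      rw [show r (n - k + 1) = Q (r (n - k) * a) from rfl, hQ, mul_assoc]
      abel
    have hT₀ : T 0 = r (n + 2) := by
      simp only [T, zero_add, pow_one, Nat.sub_zero, mul_comm a]
      rfl
    have hT : T (n + 1) = Q (a ^ (n + 2)) := by
      simp only [T, Nat.sub_self]
      rw [show r 0 = 1 from rfl, mul_one]
    calc ∑ k ∈ Finset.range (n + 2), Q (a ^ (k + 1)) * r (n + 1 - k)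
        = ∑ k ∈ Finset.range (n + 1), Q (a ^ (k + 1)) * r (n + 1 - k) + Q (a ^ (n + 2)) := by
          rw [Finset.sum_range_succ, Nat.sub_self, show r 0 = 1 from rfl, mul_one]
      _ = Q ((∑ k ∈ Finset.range (n + 1), Q (a ^ (k + 1)) * r (n - k)) * a) +
            (T 0 - T (n + 1)) + Q (a ^ (n + 2)) := by
          rw [Finset.sum_congr rfl hstep, Finset.sum_add_distrib, Finset.sum_range_sub',
            Finset.sum_mul, map_sum]
      _ = (n + 2) • r (n + 2) := by
          rw [ih, smul_mul_assoc, map_nsmul, hT₀, hT, show Q (r (n + 1) * a) = r (n + 2) from rfl,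
            add_assoc, sub_add_cancel, ← succ_nsmul]

theorem derivative_mk_QaIter
    (hQ : ∀ u v : A, Q u * Q v = Q (u * Q v) + Q (Q u * v) - Q (u * v)) :
    d⁄dX A (mk (QaIter Q a)) = (mk fun n => Q (a ^ (n + 1))) * mk (QaIter Q a) := by
  ext n
  rw [coeff_derivative, coeff_mul, Finset.Nat.sum_antidiagonal_eq_sum_range_succ_mk]
  simp only [coeff_mk]
  rw [sum_range_Q_pow_mul_QaIter a hQ, nsmul_eq_mul, mul_comm, Nat.cast_succ]

end Spitzer

/-- Spitzer's identity, commutative case: for a commutative Rota–Baxter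
`ℚ`-algebra `(A,Q)` of weight `-1`, with `P` the coefficientwise extension of `Q` to `A[[x]]`,
the element `b = exp(-P(log(1 - ax)))` solves `b = 1 + P(b a x)`; consequently
`exp(-P(log(1-ax))) = Σₙ (Qa)^{[n]} xⁿ`. -/
theorem spitzer_identity {A : Type*} [CommRing A] [Algebra ℚ A]
    (Q : A →ₗ[ℚ] A)
    (hQ : ∀ u v : A, Q u * Q v = Q (u * Q v) + Q (Q u * v) - Q (u * v)) (a : A) :
    expPS (-(coeffwise Q (logPS (1 - PowerSeries.C a * PowerSeries.X)))) =
      1 + coeffwise Q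
        (expPS (-(coeffwise Q (logPS (1 - PowerSeries.C a * PowerSeries.X)))) *
          PowerSeries.C a * PowerSeries.X) ∧
    ∀ n : ℕ,
      PowerSeries.coeff n
          (expPS (-(coeffwise Q (logPS (1 - PowerSeries.C a * PowerSeries.X))))) =
        QaIter Q a n := by
  have := IsAddTorsionFree.of_module_rat A
  have hg := constantCoeff_neg_coeffwise_logPS Q a
  have hE : expPS (-coeffwise Q (logPS (1 - C a * X))) = mk (QaIter Q a) := by
    refine eq_of_derivative_eq_mul (derivative_expPS hg) ?_ ?_
    · rw [derivative_neg_coeffwise_logPS, derivative_mk_QaIter a hQ]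
    · rw [constantCoeff_expPS, ← coeff_zero_eq_constantCoeff_apply, coeff_mk, QaIter]
  rw [hE]
  exact ⟨mk_QaIter_eq_one_add_coeffwise Q a, fun n => coeff_mk n _⟩
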